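/- Let 𝒮 be a metrizable second-countable topological space, ℓ ∈ 𝒮, and P a transition function on 𝒮. If P is strong Feller continuous at ℓ (i.e., for every bounded Borel measurable f : 𝒮 → ℝ the map s ↦ P_s f is continuous at ℓ), then for every n ≥ 1 and every bounded continuous function f : 𝒮^n → ℝ, the function s ↦ P^n_s f is continuous at ℓ. -/

import Mathlib

open MeasureTheory ProbabilityTheory Filter Topology

noncomputable section

def iterK {S : Type*} [MeasurableSpace S] (κ : Kernel S S) :
    (n : ℕ) → S → Measure (Fin (n + 1) → S)
  | 0, s => (κ s).map (fun x _ => x)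
  | n + 1, s => (iterK κ n s).bind fun p => (κ (p (Fin.last n))).map (Fin.snoc p)

/-!
Integrating out the last coordinate turns `P^{n+1}_s f` into `P^n_s h` with
`h p = ∫ f (p, y) P_{p_n}(dy)`, again bounded and Borel. By induction, `P^n_s f = P_s g` for a
bounded Borel `g : 𝒮 → ℝ`, and strong Feller continuity of `P` at `ℓ` applies to `g`.
-/

lemma abs_integral_le_of_abs_le {α : Type*} [MeasurableSpace α] {μ : Measure α}
    [IsProbabilityMeasure μ] {f : α → ℝ} {C : ℝ} (hC : ∀ x, |f x| ≤ C) :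
    |∫ x, f x ∂μ| ≤ C := by
  simpa using norm_integral_le_of_norm_le_const (μ := μ)
    (ae_of_all _ fun x => (Real.norm_eq_abs _).trans_le (hC x))

lemma MeasureTheory.Measure.integral_bind {α β E : Type*} [MeasurableSpace α] [MeasurableSpace β]
    [NormedAddCommGroup E] [NormedSpace ℝ E] (μ : Measure α) (η : Kernel α β) {f : β → E}
    (hf : Integrable f (μ.bind η)) :
    ∫ y, f y ∂(μ.bind η) = ∫ x, ∫ y, f y ∂(η x) ∂μ := by
  rw [Measure.comp_eq_comp_const_apply] at hf ⊢
  exact Kernel.integral_comp hf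

section

variable {S : Type*} [MeasurableSpace S]

lemma measurable_snoc_uncurry (n : ℕ) :
    Measurable fun q : (Fin (n + 1) → S) × S => (Fin.snoc q.1 q.2 : Fin (n + 2) → S) := by
  simp_rw [← Fin.insertNth_last']
  exact (MeasurableEquiv.piFinSuccAbove (fun _ => S) (Fin.last _)).symm.measurable.comp
    measurable_swap

lemma measurable_snoc {n : ℕ} (p : Fin (n + 1) → S) :
    Measurable (Fin.snoc (α := fun _ => S) p) :=
  (measurable_snoc_uncurry n).comp measurable_prodMk_left

def snocKernel (κ : Kernel S S) [IsSFiniteKernel κ] (n : ℕ) :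
    Kernel (Fin (n + 1) → S) (Fin (n + 2) → S) where
  toFun p := (κ (p (Fin.last n))).map (Fin.snoc p)
  measurable' := Measure.measurable_of_measurable_coe _ fun A hA => by
    change Measurable fun p => (κ (p (Fin.last n))).map (Fin.snoc p) A
    simp_rw [Measure.map_apply (measurable_snoc _) hA]
    exact (κ.comap _ (measurable_pi_apply (Fin.last n))).measurable_kernel_prodMk_left
      (measurable_snoc_uncurry n hA)

instance (κ : Kernel S S) [IsMarkovKernel κ] (n : ℕ) : IsMarkovKernel (snocKernel κ n) :=
  ⟨fun p => Measure.isProbabilityMeasure_map (measurable_snoc p).aemeasurable⟩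

lemma iterK_succ (κ : Kernel S S) [IsSFiniteKernel κ] (n : ℕ) (s : S) :
    iterK κ (n + 1) s = (iterK κ n s).bind (snocKernel κ n) := rfl

instance (κ : Kernel S S) [IsMarkovKernel κ] (n : ℕ) (s : S) :
    IsProbabilityMeasure (iterK κ n s) := by
  induction n with
  | zero => exact Measure.isProbabilityMeasure_map (by fun_prop)
  | succ n ih => rw [iterK_succ]; infer_instance

end

lemma exists_integral_iterK_eq_integral {S : Type*} [MeasurableSpace S] (κ : Kernel S S)
    [IsMarkovKernel κ] (n : ℕ) {f : (Fin (n + 1) → S) → ℝ} (hf : Measurable f)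
    (hfC : ∃ C, ∀ p, |f p| ≤ C) :
    ∃ g : S → ℝ, Measurable g ∧ (∃ C, ∀ x, |g x| ≤ C) ∧
      ∀ s, ∫ p, f p ∂(iterK κ n s) = ∫ x, g x ∂(κ s) := by
  obtain ⟨C, hC⟩ := hfC
  induction n with
  | zero =>
    have hconst : Measurable fun (x : S) (_ : Fin 1) => x :=
      measurable_pi_lambda _ fun _ => measurable_id
    refine ⟨fun x => f fun _ => x, hf.comp hconst, ⟨C, fun x => hC _⟩, fun s => ?_⟩
    exact integral_map hconst.aemeasurable hf.aestronglyMeasurable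
  | succ n ih =>
    obtain ⟨g, hg, hgC, hfg⟩ := ih (f := fun p => ∫ q, f q ∂(snocKernel κ n p))
      hf.stronglyMeasurable.integral_kernel.measurable fun p => abs_integral_le_of_abs_le hC
    refine ⟨g, hg, hgC, fun s => ?_⟩
    rw [iterK_succ, Measure.integral_bind, hfg]
    exact Integrable.of_bound hf.aestronglyMeasurable C
      (ae_of_all _ fun p => (Real.norm_eq_abs _).trans_le (hC p))

theorem statement11_general {S : Type*} [TopologicalSpace S]
    [SecondCountableTopology S] [MeasurableSpace S] [BorelSpace S]
    (κ : Kernel S S) [IsMarkovKernel κ] (ℓ : S)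
    (hFeller : ∀ f : S → ℝ, Measurable f → (∃ C : ℝ, ∀ x, |f x| ≤ C) →
      ContinuousAt (fun s => ∫ x, f x ∂(κ s)) ℓ) :
    ∀ (n : ℕ) (f : (Fin (n + 1) → S) → ℝ), Continuous f → (∃ C : ℝ, ∀ p, |f p| ≤ C) →
      ContinuousAt (fun s => ∫ p, f p ∂(iterK κ n s)) ℓ := by
  intro n f hf hfC
  obtain ⟨g, hg, hgC, hfg⟩ := exists_integral_iterK_eq_integral κ n hf.measurable hfC
  simp_rw [hfg]
  exact hFeller g hg hgC

/-- If a transition function `κ` on a metrizable second-countable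
space is strong Feller continuous at `ℓ`, then for every `n ≥ 1` and every bounded
continuous `f : 𝒮^n → ℝ`, the function `s ↦ P^n_s f` is continuous at `ℓ`. -/
theorem statement11 {S : Type*} [TopologicalSpace S] [TopologicalSpace.MetrizableSpace S]
    [SecondCountableTopology S] [MeasurableSpace S] [BorelSpace S]
    (κ : Kernel S S) [IsMarkovKernel κ] (ℓ : S)
    (hFeller : ∀ f : S → ℝ, Measurable f → (∃ C : ℝ, ∀ x, |f x| ≤ C) →
      ContinuousAt (fun s => ∫ x, f x ∂(κ s)) ℓ) :
    ∀ (n : ℕ) (f : (Fin (n + 1) → S) → ℝ), Continuous f → (∃ C : ℝ, ∀ p, |f p| ≤ C) →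
      ContinuousAt (fun s => ∫ p, f p ∂(iterK κ n s)) ℓ :=
  statement11_general κ ℓ hFeller
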